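/- Let g be a directed multigraph on vertices v_1,...,v_n with walk generator S. Define the set matrices F^1 by (F^1)_{ij} = V \ {v_i} if S_{ij} ≠ ∅ and i ≠ j, and ∅ otherwise; and F^{k+1} by (F^{k+1})_{ij} = ⋃_{β=1}^n (F^k)_{iβ} ∩ (F^1)_{βj} for i ≠ j and ∅ for i = j. If there exists a path (walk with all k+1 vertices distinct) of length k ≥ 1 from v_i to v_j, then (F^k)_{ij} ≠ ∅; moreover v_j ∈ (F^k)_{ij}. -/

import Mathlib

open Classical in
/-- The arc `F`-coloring: `(F^1)_{ij} = V \ {v_i}` if there is an arc `i → j`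
and `i ≠ j`, else `∅`. -/
noncomputable def F1 {n : ℕ} {α : Type*} (S : Fin n → Fin n → Set α) :
    Fin n → Fin n → Set (Fin n) :=
  fun i j => if (S i j).Nonempty ∧ i ≠ j then {v | v ≠ i} else ∅

/-- The walk `F`-coloring: `Fcol S k` represents `F^k` for `k ≥ 1`
(`Fcol S 0` is a junk value), with
`(F^{k+1})_{ij} = ⋃_β (F^k)_{iβ} ∩ (F^1)_{βj}` for `i ≠ j`, `∅` on the diagonal. -/
noncomputable def Fcol {n : ℕ} {α : Type*} (S : Fin n → Fin n → Set α) :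
    ℕ → Fin n → Fin n → Set (Fin n)
  | 0 => fun _ _ => ∅
  | 1 => F1 S
  | (k + 2) => fun i j =>
      if i = j then ∅ else ⋃ β : Fin n, Fcol S (k + 1) i β ∩ F1 S β j

/-- A path of length `k` from `i` to `j`: a walk whose `k+1` vertices are
pairwise distinct. -/
def HasPath {n : ℕ} {α : Type*} (S : Fin n → Fin n → Set α) (k : ℕ) (i j : Fin n) : Prop :=
  ∃ w : Fin (k + 1) → Fin n, Function.Injective w ∧ w 0 = i ∧ w (Fin.last k) = j ∧
    ∀ m : Fin k, (S (w m.castSucc) (w m.succ)).Nonempty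

lemma key {n : ℕ} {α : Type*} (S : Fin n → Fin n → Set α) :
    ∀ k (w : Fin (k + 2) → Fin n), Function.Injective w →
    (∀ m : Fin (k + 1), (S (w m.castSucc) (w m.succ)).Nonempty) →
    ∀ v : Fin n, (∀ m : Fin (k + 1), v ≠ w m.castSucc) →
    v ∈ Fcol S (k + 1) (w 0) (w (Fin.last (k + 1))) := by
  intro k
  induction k with
  | zero =>
    intro w hw harc v hv
    have h01 : w 0 ≠ w (Fin.last 1) := fun h => by
      have := hw h; exact absurd this (by decide)
    show v ∈ F1 S (w 0) (w (Fin.last 1))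
    unfold F1
    have harc0 := harc 0
    rw [if_pos ⟨by simpa using harc0, h01⟩]
    simpa using hv 0
  | succ k ih =>
    intro w hw harc v hv
    have hij : w 0 ≠ w (Fin.last (k + 2)) := fun h => by
      have := hw h; exact absurd this (by simp [Fin.ext_iff])
    show v ∈ Fcol S (k + 2) (w 0) (w (Fin.last (k + 2)))
    rw [show Fcol S (k + 2) = fun i j =>
      if i = j then ∅ else ⋃ β : Fin n, Fcol S (k + 1) i β ∩ F1 S β j from rfl]
    simp only [if_neg hij, Set.mem_iUnion]
    set β := w ((Fin.last (k + 1)).castSucc) with hβ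
    refine ⟨β, ?_, ?_⟩
    · -- use ih with w' = w ∘ castSucc
      have hw' : Function.Injective (fun m : Fin (k + 2) => w m.castSucc) :=
        fun a b h => Fin.castSucc_injective _ (hw h)
      have harc' : ∀ m : Fin (k + 1),
          (S ((fun m : Fin (k + 2) => w m.castSucc) m.castSucc)
            ((fun m : Fin (k + 2) => w m.castSucc) m.succ)).Nonempty := by
        intro m
        have := harc m.castSucc
        simpa only [Fin.succ_castSucc] using this
      have hv' : ∀ m : Fin (k + 1), v ≠ (fun m : Fin (k + 2) => w m.castSucc) m.castSucc :=
        fun m => hv m.castSucc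
      have := ih (fun m : Fin (k + 2) => w m.castSucc) hw' harc' v hv'
      simpa using this
    · -- F1 β (w last)
      have hβj : β ≠ w (Fin.last (k + 2)) := fun h => by
        have := hw h
        exact absurd this (by simp [Fin.ext_iff])
      have harcβ : (S β (w (Fin.last (k + 2)))).Nonempty := by
        have := harc (Fin.last (k + 1))
        simpa [hβ, Fin.succ_last] using this
      show v ∈ F1 S β (w (Fin.last (k + 2)))
      unfold F1
      rw [if_pos ⟨harcβ, hβj⟩]
      exact hv (Fin.last (k + 1))

theorem stmt6 {n : ℕ} {α : Type*} (S : Fin n → Fin n → Set α)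
    (k : ℕ) (hk : 1 ≤ k) (i j : Fin n) (hp : HasPath S k i j) :
    (Fcol S k i j).Nonempty ∧ j ∈ Fcol S k i j := by
  match k, hk with
  | (k + 1), _ =>
    obtain ⟨w, hw, h0, hl, harc⟩ := hp
    have hv : ∀ m : Fin (k + 1), j ≠ w m.castSucc := by
      intro m h
      rw [← hl] at h
      have := hw h
      exact absurd this.symm (Fin.ne_of_lt m.castSucc_lt_last)
    have hmem := key S k w hw harc j hv
    rw [h0, hl] at hmem
    exact ⟨⟨j, hmem⟩, hmem⟩
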